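/- Let d ≥ 2 be an integer and let τ_{i,j} be positive real numbers indexed by j ∈ {2,…,d} and i ∈ {0,…,j−2}; let τ = min and T = max of this family. Let b₁,…,b_d be real numbers with b₁² + ⋯ + b_d² = 1, and let δ be a real number with 0 < δ ≤ τ / (4(d−1)(1 + T/τ)^{d−2}). Suppose that for every k ∈ {2,…,d}, |Σ_{j=k}^{d} b_j τ_{j−k,j}| < δ. Then: |b₁| ≥ 3/4; for every j ∈ {2,…,d}, |b_j| ≤ δ(1 + T/τ)^{d−2}/τ; and |Σ_{j=1}^{d} b_j| ≥ 1/2. -/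
import Mathlib


noncomputable section

open Finset

/-- Bounds on coefficients `b₁,…,b_d` (with `Σ b_j² = 1`) when all the
linear combinations `Σ_{j=k}^d b_j τ_{j−k,j}` are small: `|b₁| ≥ 3/4`,
`|b_j| ≤ δ(1+T/τ)^{d−2}/τ` for `j ≥ 2`, and `|Σ b_j| ≥ 1/2`.
Here `tmin` and `Tmax` are the minimum and maximum of the family `τ_{i,j}`
(`2 ≤ j ≤ d`, `0 ≤ i ≤ j−2`). -/
theorem statement15 (d : ℕ) (hd : 2 ≤ d) (τ : ℕ → ℕ → ℝ)
    (hτpos : ∀ j, 2 ≤ j → j ≤ d → ∀ i, i ≤ j - 2 → 0 < τ i j)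
    (tmin Tmax : ℝ)
    (htmin_le : ∀ j, 2 ≤ j → j ≤ d → ∀ i, i ≤ j - 2 → tmin ≤ τ i j)
    (htmin_mem : ∃ j, 2 ≤ j ∧ j ≤ d ∧ ∃ i, i ≤ j - 2 ∧ tmin = τ i j)
    (hT_ge : ∀ j, 2 ≤ j → j ≤ d → ∀ i, i ≤ j - 2 → τ i j ≤ Tmax)
    (hT_mem : ∃ j, 2 ≤ j ∧ j ≤ d ∧ ∃ i, i ≤ j - 2 ∧ Tmax = τ i j)
    (b : ℕ → ℝ) (hb : ∑ j ∈ Finset.Icc 1 d, (b j) ^ 2 = 1)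
    (δ : ℝ) (hδ0 : 0 < δ)
    (hδ : δ ≤ tmin / (4 * ((d : ℝ) - 1) * (1 + Tmax / tmin) ^ (d - 2)))
    (hsmall : ∀ k, 2 ≤ k → k ≤ d → |∑ j ∈ Finset.Icc k d, b j * τ (j - k) j| < δ) :
    3 / 4 ≤ |b 1| ∧
    (∀ j, 2 ≤ j → j ≤ d → |b j| ≤ δ * (1 + Tmax / tmin) ^ (d - 2) / tmin) ∧
    1 / 2 ≤ |∑ j ∈ Finset.Icc 1 d, b j| := by
  obtain ⟨j₀, hj₀2, hj₀d, i₀, hi₀, htm⟩ := htmin_mem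
  have hs : 0 < tmin := htm ▸ hτpos j₀ hj₀2 hj₀d i₀ hi₀
  have hsT : tmin ≤ Tmax := htm ▸ hT_ge j₀ hj₀2 hj₀d i₀ hi₀
  set R : ℝ := 1 + Tmax / tmin with hR
  have hR2 : 2 ≤ R := by
    have : 1 ≤ Tmax / tmin := (one_le_div hs).2 hsT
    rw [hR]; linarith
  have hR1 : (1:ℝ) ≤ R := by linarith
  have hR0 : (0:ℝ) < R := by linarith
  have hRm1 : R - 1 = Tmax / tmin := by rw [hR]; ring
  have hD : (0:ℝ) < (d:ℝ) - 1 := by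
    have : (2:ℝ) ≤ d := by exact_mod_cast hd
    linarith
  have hRp : (0:ℝ) < R ^ (d - 2) := pow_pos hR0 _
  -- main back-substitution induction
  have key : ∀ m : ℕ, ∀ k, 2 ≤ k → k ≤ d → d - k = m → |b k| * tmin ≤ δ * R ^ (d - k) := by
    intro m
    induction m using Nat.strong_induction_on with
    | _ m ih =>
      intro k hk2 hkd hm
      have hsplit : Finset.Icc k d = insert k (Finset.Icc (k+1) d) := by
        ext x; simp [Finset.mem_Icc]; omega
      have hknot : k ∉ Finset.Icc (k+1) d := by simp
      have hS := hsmall k hk2 hkd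
      rw [hsplit, Finset.sum_insert hknot, Nat.sub_self] at hS
      have tail : |∑ j ∈ Finset.Icc (k+1) d, b j * τ (j - k) j| ≤ δ * (R ^ (d - k) - 1) := by
        calc |∑ j ∈ Finset.Icc (k+1) d, b j * τ (j - k) j|
            ≤ ∑ j ∈ Finset.Icc (k+1) d, |b j * τ (j - k) j| :=
              Finset.abs_sum_le_sum_abs _ _
          _ ≤ ∑ j ∈ Finset.Icc (k+1) d, (δ * R ^ (d - j) / tmin) * Tmax := by
              apply Finset.sum_le_sum
              intro j hj
              rw [Finset.mem_Icc] at hj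
              have hj2 : 2 ≤ j := by omega
              have hjd : j ≤ d := hj.2
              have hτb := hT_ge j hj2 hjd (j - k) (by omega)
              have hτ0 := hτpos j hj2 hjd (j - k) (by omega)
              have hbj : |b j| ≤ δ * R ^ (d - j) / tmin := by
                have h := ih (d - j) (by omega) j hj2 hjd rfl
                rw [le_div_iff₀ hs]; linarith
              rw [abs_mul, abs_of_pos hτ0]
              exact mul_le_mul hbj hτb (le_of_lt hτ0) (by positivity)
          _ = (δ * Tmax / tmin) * ∑ j ∈ Finset.Icc (k+1) d, R ^ (d - j) := by
              rw [Finset.mul_sum]; apply Finset.sum_congr rfl; intro j _; ring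
          _ = (δ * (R - 1)) * ∑ i ∈ Finset.range (d - k), R ^ i := by
              congr 1
              · rw [hRm1]; ring
              · rw [← Finset.Ico_add_one_right_eq_Icc, Finset.sum_Ico_eq_sum_range]
                have hn : d + 1 - (k + 1) = d - k := by omega
                rw [hn]
                rw [← Finset.sum_range_reflect]
                apply Finset.sum_congr rfl
                intro i hi
                rw [Finset.mem_range] at hi
                congr 1
                omega
          _ = δ * (R ^ (d - k) - 1) := by
              have := geom_sum_mul R (d - k)
              nlinarith [this]
      have hτ0k := hτpos k hk2 hkd 0 (by omega)
      have hτ0k' := htmin_le k hk2 hkd 0 (by omega)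
      have h1 : |b k * τ 0 k| ≤ δ + δ * (R ^ (d - k) - 1) := by
        have : b k * τ 0 k = (b k * τ 0 k + ∑ j ∈ Finset.Icc (k+1) d, b j * τ (j - k) j)
            - ∑ j ∈ Finset.Icc (k+1) d, b j * τ (j - k) j := by ring
        rw [this]
        calc |_ - _| ≤ |b k * τ 0 k + ∑ j ∈ Finset.Icc (k+1) d, b j * τ (j - k) j| +
              |∑ j ∈ Finset.Icc (k+1) d, b j * τ (j - k) j| := abs_sub _ _
          _ ≤ δ + δ * (R ^ (d - k) - 1) := add_le_add (le_of_lt hS) tail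
      have h2 : |b k| * tmin ≤ |b k| * τ 0 k :=
        mul_le_mul_of_nonneg_left hτ0k' (abs_nonneg _)
      rw [abs_mul, abs_of_pos hτ0k] at h1
      calc |b k| * tmin ≤ |b k| * τ 0 k := h2
        _ ≤ δ + δ * (R ^ (d - k) - 1) := h1
        _ = δ * R ^ (d - k) := by ring
  -- the uniform bound for j ≥ 2
  have bound2 : ∀ j, 2 ≤ j → j ≤ d → |b j| ≤ δ * R ^ (d - 2) / tmin := by
    intro j hj2 hjd
    have h := key (d - j) j hj2 hjd rfl
    have hpow : R ^ (d - j) ≤ R ^ (d - 2) := pow_le_pow_right₀ hR1 (by omega)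
    rw [le_div_iff₀ hs]
    nlinarith
  -- the bound δ R^(d-2)/tmin ≤ 1/(4(d-1))
  have hC : δ * R ^ (d - 2) / tmin ≤ 1 / (4 * ((d:ℝ) - 1)) := by
    rw [div_le_div_iff₀ hs (by positivity)]
    rw [le_div_iff₀ (by positivity)] at hδ
    nlinarith
  have bound2' : ∀ j, 2 ≤ j → j ≤ d → |b j| ≤ 1 / (4 * ((d:ℝ) - 1)) := fun j h2 hd' =>
    le_trans (bound2 j h2 hd') hC
  -- split the sums at 1
  have hsplit1 : Finset.Icc 1 d = insert 1 (Finset.Icc 2 d) := by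
    ext x; simp [Finset.mem_Icc]; omega
  have h1not : (1:ℕ) ∉ Finset.Icc 2 d := by simp
  have hcard : ((Finset.Icc 2 d).card : ℝ) = (d:ℝ) - 1 := by
    rw [Nat.card_Icc]
    have : d + 1 - 2 = d - 1 := by omega
    rw [this]
    push_cast [Nat.cast_sub (by omega : 1 ≤ d)]
    ring
  rw [hsplit1, Finset.sum_insert h1not] at hb
  have hsumsq : ∑ j ∈ Finset.Icc 2 d, (b j) ^ 2 ≤ 1 / 16 := by
    calc ∑ j ∈ Finset.Icc 2 d, (b j) ^ 2
        ≤ ∑ j ∈ Finset.Icc 2 d, (1 / (4 * ((d:ℝ) - 1))) ^ 2 := by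
          apply Finset.sum_le_sum
          intro j hj
          rw [Finset.mem_Icc] at hj
          have h := bound2' j hj.1 hj.2
          nlinarith [abs_nonneg (b j), sq_abs (b j)]
      _ = ((d:ℝ) - 1) * (1 / (4 * ((d:ℝ) - 1))) ^ 2 := by
          rw [Finset.sum_const, nsmul_eq_mul, hcard]
      _ ≤ 1 / 16 := by
          have h1 : (1:ℝ) ≤ (d:ℝ) - 1 := by
            have : (2:ℝ) ≤ d := by exact_mod_cast hd
            linarith
          have heq : ((d:ℝ) - 1) * (1 / (4 * ((d:ℝ) - 1))) ^ 2
              = 1 / (16 * ((d:ℝ) - 1)) := by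
            field_simp
            ring
          rw [heq, div_le_div_iff₀ (by positivity) (by norm_num : (0:ℝ) < 16)]
          linarith
  have hb1 : 3 / 4 ≤ |b 1| := by
    have hb1sq : (15:ℝ) / 16 ≤ b 1 ^ 2 := by linarith
    have e1 : |b 1| = Real.sqrt (b 1 ^ 2) := (Real.sqrt_sq_eq_abs _).symm
    have e2 : (3/4:ℝ) = Real.sqrt (9/16) := by
      rw [show (9/16:ℝ) = (3/4)^2 by norm_num, Real.sqrt_sq (by norm_num)]
    rw [e1, e2]
    exact Real.sqrt_le_sqrt (by linarith)
  refine ⟨hb1, bound2, ?_⟩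
  have hsum2 : |∑ j ∈ Finset.Icc 2 d, b j| ≤ 1 / 4 := by
    calc |∑ j ∈ Finset.Icc 2 d, b j| ≤ ∑ j ∈ Finset.Icc 2 d, |b j| :=
          Finset.abs_sum_le_sum_abs _ _
      _ ≤ ∑ j ∈ Finset.Icc 2 d, 1 / (4 * ((d:ℝ) - 1)) := by
          apply Finset.sum_le_sum
          intro j hj
          rw [Finset.mem_Icc] at hj
          exact bound2' j hj.1 hj.2
      _ = ((d:ℝ) - 1) * (1 / (4 * ((d:ℝ) - 1))) := by
          rw [Finset.sum_const, nsmul_eq_mul, hcard]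
      _ = 1 / 4 := by field_simp
  rw [hsplit1, Finset.sum_insert h1not]
  have h := abs_add_le (b 1 + ∑ j ∈ Finset.Icc 2 d, b j) (-(∑ j ∈ Finset.Icc 2 d, b j))
  simp only [add_neg_cancel_right, abs_neg] at h
  linarith
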